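/- Let n ≥ 1, p > 1, x, z ∈ S^n with ∢(x,z) = π/2, and μ a Borel probability measure on S^n. Then lim_{s→0+} [T^p_μ(cos s · x + sin s · z) − 2 T^p_μ(x) + T^p_μ(cos s · x − sin s · z)]/s = −2 p π^{p−1} μ({−x}). -/

import Mathlib

open MeasureTheory Filter

/-- The `p`-Wasserstein distance with cost function `c` (the distance of the
underlying space): infimum over couplings of `∫ c(x,y)^p dπ`, to the power `1/p`. -/
noncomputable def wassersteinDist {X : Type*} [MeasurableSpace X]
    (c : X → X → ℝ) (p : ℝ) (μ ν : Measure X) : ℝ :=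
  sInf {r : ℝ | ∃ π : Measure (X × X), IsProbabilityMeasure π ∧
      π.map Prod.fst = μ ∧ π.map Prod.snd = ν ∧
      r = ∫ q, c q.1 q.2 ^ p ∂π} ^ (1 / p)

/-- The unit sphere of `ℝ^{n+1}`. -/
abbrev Sph (n : ℕ) := Metric.sphere (0 : EuclideanSpace ℝ (Fin (n + 1))) 1

/-- The angular (geodesic) distance on the sphere: `∢(x,y) = arccos ⟨x,y⟩`. -/
noncomputable def sphAngle {n : ℕ} (x y : Sph n) : ℝ :=
  Real.arccos (inner ℝ (x : EuclideanSpace ℝ (Fin (n + 1))) (y : EuclideanSpace ℝ (Fin (n + 1))))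

/-- The `p`-Wasserstein potential of a measure on the sphere, evaluated at an
ambient vector `v`: `∫ arccos⟨v,y⟩^p dμ(y)`. -/
noncomputable def sphPotential {n : ℕ} (p : ℝ) (μ : MeasureTheory.Measure (Sph n))
    (v : EuclideanSpace ℝ (Fin (n + 1))) : ℝ :=
  ∫ y, Real.arccos (inner ℝ v (y : EuclideanSpace ℝ (Fin (n + 1)))) ^ p ∂μ

/-!
Write `f_y(t) = ∢(cos t • x + sin t • z, y) ^ p`, so that the quotient in question is
`∫ (f_y(s) - 2 f_y(0) + f_y(-s)) / s dμ(y)`. Since `t ↦ cos t • x + sin t • z` is a unit-speed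
great circle, the triangle inequality for angles and the Lipschitz bound for `t ^ p` on `[0, π]`
bound the integrand by `2 p π ^ (p - 1)`, so dominated convergence applies. Pointwise, `f_y` is
differentiable at `0` when `y ≠ ±x`, so the symmetric quotient tends to `0`; for `y = x` we have
`f_y(t) = |t| ^ p`, whose quotient also tends to `0` because `p > 1`; and for `y = -x` we have
`f_y(t) = (π - |t|) ^ p`, whose corner at `0` contributes `-2 p π ^ (p - 1)`.
-/

open Real Set Filter Topology InnerProductGeometry RealInnerProductSpace

noncomputable def secondDiffQuot (f : ℝ → ℝ) (s : ℝ) : ℝ := (f s - 2 * f 0 + f (-s)) / s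

lemma abs_rpow_sub_rpow_le {p M u v : ℝ} (hp : 1 ≤ p) (hu : u ∈ Icc 0 M) (hv : v ∈ Icc 0 M) :
    |u ^ p - v ^ p| ≤ p * M ^ (p - 1) * |u - v| := by
  have hderiv_le : ∀ t ∈ Icc 0 M, ‖p * t ^ (p - 1)‖ ≤ p * M ^ (p - 1) := fun t ht => by
    rw [norm_mul, norm_of_nonneg (by linarith), norm_of_nonneg (rpow_nonneg ht.1 _)]
    gcongr
    exacts [ht.1, ht.2]
  simpa only [norm_eq_abs] using (convex_Icc 0 M).norm_image_sub_le_of_norm_hasDerivWithin_le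
    (fun t _ => (hasDerivAt_rpow_const (Or.inr hp)).hasDerivWithinAt) hderiv_le hv hu

lemma abs_secondDiffQuot_le {f : ℝ → ℝ} {C s : ℝ} (hs : 0 < s) (hright : |f s - f 0| ≤ C * s)
    (hleft : |f (-s) - f 0| ≤ C * s) : |secondDiffQuot f s| ≤ 2 * C := by
  rw [secondDiffQuot, abs_div, abs_of_pos hs, div_le_iff₀ hs]
  calc |f s - 2 * f 0 + f (-s)| = |(f s - f 0) + (f (-s) - f 0)| := by ring_nf
    _ ≤ |f s - f 0| + |f (-s) - f 0| := abs_add_le _ _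
    _ ≤ 2 * C * s := by linarith

lemma HasDerivAt.tendsto_secondDiffQuot {f : ℝ → ℝ} {f' : ℝ} (hf : HasDerivAt f f' 0) :
    Tendsto (secondDiffQuot f) (𝓝[>] 0) (𝓝 0) := by
  have hright := hf.tendsto_slope_zero_right
  have hleft := hf.tendsto_slope_zero_left.comp
    (neg_zero (G := ℝ) ▸ tendsto_neg_nhdsGT_neg (a := 0))
  have hdiff := hright.sub hleft
  rw [sub_self] at hdiff
  refine hdiff.congr fun s => ?_
  simp only [secondDiffQuot, Function.comp_apply, zero_add, smul_eq_mul, inv_neg]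
  ring

lemma tendsto_secondDiffQuot_of_eventuallyEq_comp_abs {f g : ℝ → ℝ} {g' : ℝ}
    (hg : HasDerivAt g g' 0) (hfg : ∀ᶠ t in 𝓝 0, f t = g |t|) :
    Tendsto (secondDiffQuot f) (𝓝[>] 0) (𝓝 (2 * g')) := by
  have h0 : f 0 = g 0 := by simpa using hfg.self_of_nhds
  have hneg : ∀ᶠ t in 𝓝 0, f (-t) = g |t| := by
    simpa using (continuous_neg.tendsto' (0 : ℝ) 0 neg_zero).eventually hfg
  refine (hg.tendsto_slope_zero_right.const_mul 2).congr' ?_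
  filter_upwards [nhdsWithin_le_nhds hfg, nhdsWithin_le_nhds hneg, self_mem_nhdsWithin]
    with s hs hs' hs0
  rw [abs_of_pos hs0] at hs hs'
  simp only [secondDiffQuot, zero_add, smul_eq_mul, h0, hs, hs']
  ring

namespace InnerProductGeometry

variable {E : Type*} [NormedAddCommGroup E] [InnerProductSpace ℝ E]

lemma abs_angle_sub_angle_le (u v w : E) : |angle u w - angle v w| ≤ angle u v := by
  have h₁ := angle_le_angle_add_angle u v w
  have h₂ := angle_le_angle_add_angle v u w
  rw [angle_comm v u] at h₂
  exact abs_sub_le_iff.mpr ⟨by linarith, by linarith⟩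

lemma angle_eq_arccos_inner_of_norm_eq_one {u v : E} (hu : ‖u‖ = 1) (hv : ‖v‖ = 1) :
    angle u v = arccos ⟪u, v⟫ := by
  rw [angle, hu, hv, mul_one, div_one]

end InnerProductGeometry

section

variable {E : Type*} [NormedAddCommGroup E] [InnerProductSpace ℝ E]

noncomputable def greatCircle (x z : E) (t : ℝ) : E := cos t • x + sin t • z

section greatCircle

variable {x z : E}

@[simp]
lemma greatCircle_zero : greatCircle x z 0 = x := by simp [greatCircle]

lemma greatCircle_neg (t : ℝ) : greatCircle x z (-t) = cos t • x - sin t • z := by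
  simp [greatCircle, sub_eq_add_neg]

lemma inner_greatCircle_left (t : ℝ) (y : E) :
    ⟪greatCircle x z t, y⟫ = cos t * ⟪x, y⟫ + sin t * ⟪z, y⟫ := by
  simp only [greatCircle, inner_add_left, real_inner_smul_left]

variable (hx : ‖x‖ = 1) (hz : ‖z‖ = 1) (hxz : ⟪x, z⟫ = 0)
include hx hz hxz

lemma norm_greatCircle (t : ℝ) : ‖greatCircle x z t‖ = 1 := by
  have hsq : ‖greatCircle x z t‖ ^ 2 = 1 := by
    rw [← real_inner_self_eq_norm_sq, inner_greatCircle_left, greatCircle, inner_add_right,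
      inner_add_right, real_inner_smul_right, real_inner_smul_right, real_inner_smul_right,
      real_inner_smul_right, real_inner_comm x z, hxz, real_inner_self_eq_norm_sq,
      real_inner_self_eq_norm_sq, hx, hz]
    linear_combination sin_sq_add_cos_sq t
  exact (pow_eq_one_iff_of_nonneg (norm_nonneg _) two_ne_zero).mp hsq

lemma angle_greatCircle {t : ℝ} (ht : |t| ≤ π) : angle x (greatCircle x z t) = |t| := by
  rw [angle_eq_arccos_inner_of_norm_eq_one hx (norm_greatCircle hx hz hxz t), real_inner_comm,
    inner_greatCircle_left, real_inner_comm x z, hxz, real_inner_self_eq_norm_sq, hx, ← cos_abs]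
  simpa using arccos_cos (abs_nonneg t) ht

lemma abs_arccos_inner_greatCircle_sub_le {y : E} (hy : ‖y‖ = 1) {t : ℝ} (ht : |t| ≤ π) :
    |arccos ⟪greatCircle x z t, y⟫ - arccos ⟪x, y⟫| ≤ |t| := by
  rw [← angle_eq_arccos_inner_of_norm_eq_one (norm_greatCircle hx hz hxz t) hy,
    ← angle_eq_arccos_inner_of_norm_eq_one hx hy]
  calc _ ≤ angle (greatCircle x z t) x := abs_angle_sub_angle_le _ _ _
    _ = |t| := by rw [angle_comm, angle_greatCircle hx hz hxz ht]

lemma arccos_inner_greatCircle_self {t : ℝ} (ht : |t| ≤ π) :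
    arccos ⟪greatCircle x z t, x⟫ = |t| := by
  rw [← angle_eq_arccos_inner_of_norm_eq_one (norm_greatCircle hx hz hxz t) hx, angle_comm,
    angle_greatCircle hx hz hxz ht]

lemma abs_arccos_inner_greatCircle_rpow_sub_le {p : ℝ} (hp : 1 ≤ p) {y : E} (hy : ‖y‖ = 1)
    {t : ℝ} (ht : |t| ≤ π) :
    |arccos ⟪greatCircle x z t, y⟫ ^ p - arccos ⟪x, y⟫ ^ p| ≤ p * π ^ (p - 1) * |t| :=
  (abs_rpow_sub_rpow_le hp ⟨arccos_nonneg _, arccos_le_pi _⟩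
      ⟨arccos_nonneg _, arccos_le_pi _⟩).trans <|
    mul_le_mul_of_nonneg_left (abs_arccos_inner_greatCircle_sub_le hx hz hxz hy ht) (by positivity)

lemma abs_secondDiffQuot_arccos_inner_greatCircle_rpow_le {p : ℝ} (hp : 1 ≤ p) {y : E}
    (hy : ‖y‖ = 1) {s : ℝ} (hs : 0 < s) (hsπ : s ≤ π) :
    |secondDiffQuot (fun t => arccos ⟪greatCircle x z t, y⟫ ^ p) s| ≤ 2 * (p * π ^ (p - 1)) := by
  refine abs_secondDiffQuot_le hs ?_ ?_
  · simpa [abs_of_pos hs] using abs_arccos_inner_greatCircle_rpow_sub_le hx hz hxz hp hy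
      (t := s) (by rwa [abs_of_pos hs])
  · simpa [abs_of_pos hs] using abs_arccos_inner_greatCircle_rpow_sub_le hx hz hxz hp hy
      (t := -s) (by rwa [abs_neg, abs_of_pos hs])

lemma tendsto_secondDiffQuot_arccos_inner_greatCircle_rpow {p : ℝ} (hp : 1 < p) {y : E}
    (hy : ‖y‖ = 1) :
    Tendsto (secondDiffQuot (fun t => arccos ⟪greatCircle x z t, y⟫ ^ p)) (𝓝[>] 0)
      (𝓝 (({-x} : Set E).indicator (fun _ => -2 * p * π ^ (p - 1)) y)) := by
  have hsmall : ∀ᶠ t in 𝓝 (0 : ℝ), |t| ≤ π :=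
    (continuous_abs.tendsto' 0 0 abs_zero).eventually (ge_mem_nhds pi_pos)
  by_cases hyx : y = -x
  · have hg : HasDerivAt (fun t => (π - t) ^ p) (p * (π - 0) ^ (p - 1) * (-1)) 0 :=
      (hasDerivAt_rpow_const (Or.inr hp.le)).comp 0 ((hasDerivAt_id 0).const_sub π)
    rw [indicator_of_mem (show y ∈ ({-x} : Set E) from hyx),
      show -2 * p * π ^ (p - 1) = 2 * (p * (π - 0) ^ (p - 1) * (-1)) by rw [sub_zero]; ring]
    exact tendsto_secondDiffQuot_of_eventuallyEq_comp_abs hg (hsmall.mono fun t ht => by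
      rw [hyx, inner_neg_right, arccos_neg, arccos_inner_greatCircle_self hx hz hxz ht])
  rw [indicator_of_notMem (show y ∉ ({-x} : Set E) from hyx)]
  by_cases hxy : y = x
  · have hg : HasDerivAt (fun t => t ^ p) (p * 0 ^ (p - 1)) 0 :=
      hasDerivAt_rpow_const (Or.inr hp.le)
    have hlim := tendsto_secondDiffQuot_of_eventuallyEq_comp_abs
      (f := fun t => arccos ⟪greatCircle x z t, y⟫ ^ p) hg (hsmall.mono fun t ht => by
        rw [hxy, arccos_inner_greatCircle_self hx hz hxz ht])
    rwa [zero_rpow (by linarith), mul_zero, mul_zero] at hlim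
  have hne_one : ⟪x, y⟫ ≠ 1 := fun h => hxy ((inner_eq_one_iff_of_norm_eq_one hx hy).mp h).symm
  have hne_neg_one : ⟪x, y⟫ ≠ -1 := fun h =>
    hyx (by rw [(inner_eq_neg_one_iff_of_norm_eq_one hx hy).mp h, neg_neg])
  have hdiff : DifferentiableAt ℝ (fun t => arccos ⟪greatCircle x z t, y⟫ ^ p) 0 := by
    simp_rw [inner_greatCircle_left]
    refine DifferentiableAt.rpow_const ?_ (Or.inr hp.le)
    refine (differentiableAt_arccos.mpr ?_).comp 0 (by fun_prop)
    simpa using ⟨hne_neg_one, hne_one⟩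
  exact hdiff.hasDerivAt.tendsto_secondDiffQuot

end greatCircle

open MeasureTheory Metric

lemma secondDiffQuot_integral {α : Type*} [MeasurableSpace α] {μ : Measure α} {F : ℝ → α → ℝ}
    (hF : ∀ t, Integrable (F t) μ) (s : ℝ) :
    secondDiffQuot (fun t => ∫ a, F t a ∂μ) s = ∫ a, secondDiffQuot (fun t => F t a) s ∂μ := by
  simp only [secondDiffQuot]
  rw [integral_div, integral_add, integral_sub, integral_const_mul]
  exacts [hF s, (hF 0).const_mul 2, (hF s).sub ((hF 0).const_mul 2), hF (-s)]

lemma integrable_arccos_inner_rpow [MeasurableSpace E] [OpensMeasurableSpace E] {p : ℝ}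
    (hp : 0 ≤ p) (μ : Measure (sphere (0 : E) 1)) [IsFiniteMeasure μ] (v : E) :
    Integrable (fun y : sphere (0 : E) 1 => arccos ⟪v, y⟫ ^ p) μ := by
  refine (integrable_const (π ^ p)).mono' ?_ (ae_of_all _ fun y => ?_)
  · exact ((continuous_rpow_const hp).comp
      (continuous_arccos.comp (continuous_const.inner continuous_subtype_val))).aestronglyMeasurable
  · rw [norm_of_nonneg (rpow_nonneg (arccos_nonneg _) _)]
    exact rpow_le_rpow (arccos_nonneg _) (arccos_le_pi _) hp

theorem tendsto_secondDiffQuot_integral_arccos_inner_greatCircle_rpow [MeasurableSpace E]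
    [OpensMeasurableSpace E] {p : ℝ} (hp : 1 < p) {x z : sphere (0 : E) 1} (hxz : ⟪(x : E), z⟫ = 0)
    (μ : Measure (sphere (0 : E) 1)) [IsFiniteMeasure μ] :
    Tendsto (secondDiffQuot fun t => ∫ y, arccos ⟪greatCircle (x : E) z t, y⟫ ^ p ∂μ) (𝓝[>] 0)
      (𝓝 (-2 * p * π ^ (p - 1) * μ.real {-x})) := by
  have hx := norm_eq_of_mem_sphere x
  have hz := norm_eq_of_mem_sphere z
  have hint (t : ℝ) :=
    integrable_arccos_inner_rpow (p := p) (by linarith) μ (greatCircle (x : E) z t)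
  have hlim_eq : ∫ y, ({-(x : E)} : Set E).indicator (fun _ => -2 * p * π ^ (p - 1)) (y : E) ∂μ =
      -2 * p * π ^ (p - 1) * μ.real {-x} := by
    have hpre : ((↑) : sphere (0 : E) 1 → E) ⁻¹' {-(x : E)} = {-x} := by
      ext y
      simp [Subtype.ext_iff, coe_neg_sphere]
    simp_rw [← indicator_comp_right, hpre, Function.comp_def]
    rw [integral_indicator_const _ (measurableSet_singleton _), smul_eq_mul, mul_comm]
  rw [funext (secondDiffQuot_integral hint), ← hlim_eq]
  refine tendsto_integral_filter_of_dominated_convergence (fun _ => 2 * (p * π ^ (p - 1)))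
    (Eventually.of_forall fun s => ?_) ?_ (integrable_const _)
    (ae_of_all _ fun y => tendsto_secondDiffQuot_arccos_inner_greatCircle_rpow hx hz hxz hp
      (norm_eq_of_mem_sphere y))
  · exact (((hint s).sub ((hint 0).const_mul 2)).add (hint (-s))).div_const s
      |>.aestronglyMeasurable
  · filter_upwards [Ioc_mem_nhdsGT pi_pos] with s hs
    exact ae_of_all _ fun y => abs_secondDiffQuot_arccos_inner_greatCircle_rpow_le hx hz hxz hp.le
      (norm_eq_of_mem_sphere y) hs.1 hs.2

end

theorem sphere_potential_second_difference_general {n : ℕ}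
    {p : ℝ} (hp : 1 < p) (x z : Sph n) (hxz : sphAngle x z = Real.pi / 2)
    (μ : Measure (Sph n)) (hμ : IsProbabilityMeasure μ) :
    Tendsto (fun s : ℝ =>
        (sphPotential p μ (Real.cos s • (x : EuclideanSpace ℝ (Fin (n + 1))) +
            Real.sin s • (z : EuclideanSpace ℝ (Fin (n + 1)))) -
          2 * sphPotential p μ (x : EuclideanSpace ℝ (Fin (n + 1))) +
          sphPotential p μ (Real.cos s • (x : EuclideanSpace ℝ (Fin (n + 1))) -
            Real.sin s • (z : EuclideanSpace ℝ (Fin (n + 1))))) / s)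
      (nhdsWithin 0 (Set.Ioi 0))
      (nhds (-2 * p * Real.pi ^ (p - 1) * (μ {-x}).toReal)) := by
  have hinner : ⟪(x : EuclideanSpace ℝ (Fin (n + 1))), z⟫ = 0 := arccos_eq_pi_div_two.mp hxz
  refine (tendsto_secondDiffQuot_integral_arccos_inner_greatCircle_rpow hp hinner μ).congr
    fun s => ?_
  simp only [secondDiffQuot, greatCircle_zero, greatCircle_neg]
  rfl

/-- Second-difference formula for the Wasserstein potential on the sphere,
case `p > 1`: the limit recovers the mass of the antipodal point. -/
theorem sphere_potential_second_difference {n : ℕ} (hn : 1 ≤ n)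
    {p : ℝ} (hp : 1 < p) (x z : Sph n) (hxz : sphAngle x z = Real.pi / 2)
    (μ : Measure (Sph n)) (hμ : IsProbabilityMeasure μ) :
    Tendsto (fun s : ℝ =>
        (sphPotential p μ (Real.cos s • (x : EuclideanSpace ℝ (Fin (n + 1))) +
            Real.sin s • (z : EuclideanSpace ℝ (Fin (n + 1)))) -
          2 * sphPotential p μ (x : EuclideanSpace ℝ (Fin (n + 1))) +
          sphPotential p μ (Real.cos s • (x : EuclideanSpace ℝ (Fin (n + 1))) -
            Real.sin s • (z : EuclideanSpace ℝ (Fin (n + 1))))) / s)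
      (nhdsWithin 0 (Set.Ioi 0))
      (nhds (-2 * p * Real.pi ^ (p - 1) * (μ {-x}).toReal)) :=
  sphere_potential_second_difference_general hp x z hxz μ hμ
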